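/- Let μ be a probability measure on a measurable space Ω, let X, Y : Ω → ℝ be random variables in L²(μ) with Y ≥ 0 μ-almost everywhere and Var(Y) > 0, and let λ ≥ 0. Set ε₀ := max(0, −Cov(X, Y)/Var(Y)). Then the function ε ↦ −E[X + ε·Y] − λ·√(Var(X + ε·Y)) is antitone (monotone nonincreasing) on [ε₀, ∞). -/

import Mathlib

open MeasureTheory

/-- Variance `Var(Z) := E[(Z − E[Z])²]`. -/
noncomputable def Var {Ω : Type*} [MeasurableSpace Ω] (μ : Measure Ω) (Z : Ω → ℝ) : ℝ :=
  ∫ ω, (Z ω - ∫ ω', Z ω' ∂μ) ^ 2 ∂μ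

/-- Covariance `Cov(X, Y) := E[(X − E[X])(Y − E[Y])]`. -/
noncomputable def Cov {Ω : Type*} [MeasurableSpace Ω] (μ : Measure Ω) (X Y : Ω → ℝ) : ℝ :=
  ∫ ω, (X ω - ∫ ω', X ω' ∂μ) * (Y ω - ∫ ω', Y ω' ∂μ) ∂μ

/- The variance term is the square root of a quadratic `Var X + 2 ε Cov(X, Y) + ε² Var Y` whose
vertex is at `-Cov(X, Y) / Var Y`, so it is nondecreasing to the right of that point; the mean term
`-E[X] - ε E[Y]` is nonincreasing because `E[Y] ≥ 0`. -/

open ProbabilityTheory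

section Moments

variable {Ω : Type*} [MeasurableSpace Ω] {μ : Measure Ω}

lemma Var_eq_variance {Z : Ω → ℝ} (hZ : AEMeasurable Z μ) : Var μ Z = variance Z μ :=
  (variance_eq_integral hZ).symm

lemma Cov_eq_covariance (X Y : Ω → ℝ) : Cov μ X Y = covariance X Y μ := rfl

lemma Var_add_const_mul [IsFiniteMeasure μ] {X Y : Ω → ℝ} (hX : MemLp X 2 μ) (hY : MemLp Y 2 μ)
    (ε : ℝ) :
    Var μ (fun ω => X ω + ε * Y ω) = Var μ X + 2 * ε * Cov μ X Y + ε ^ 2 * Var μ Y := by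
  have hεY : MemLp (fun ω => ε * Y ω) 2 μ := hY.const_mul ε
  rw [Var_eq_variance (Z := fun ω => X ω + ε * Y ω) (hX.aemeasurable.add hεY.aemeasurable),
    Var_eq_variance hX.aemeasurable, Var_eq_variance hY.aemeasurable,
    Cov_eq_covariance, variance_fun_add hX hεY,
    covariance_const_mul_right, variance_const_mul]
  ring

lemma antitone_neg_integral_add_const_mul {X Y : Ω → ℝ} (hX : Integrable X μ)
    (hY : Integrable Y μ) (hY0 : 0 ≤ᵐ[μ] Y) :
    Antitone fun ε : ℝ => -∫ ω, (X ω + ε * Y ω) ∂μ := by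
  intro s t hst
  simp only [integral_add hX (hY.const_mul _), integral_const_mul]
  linarith [mul_le_mul_of_nonneg_right hst (integral_nonneg_of_ae hY0)]

end Moments

lemma monotoneOn_quadratic {a b c : ℝ} (hc : 0 < c) :
    MonotoneOn (fun x => a + 2 * x * b + x ^ 2 * c) (Set.Ici (-b / c)) := by
  intro s hs t ht hst
  have hs' : -b ≤ s * c := (div_le_iff₀ hc).mp hs
  have ht' : -b ≤ t * c := (div_le_iff₀ hc).mp ht
  -- `q t - q s = (t - s) (2 b + (s + t) c)`
  nlinarith [mul_nonneg (sub_nonneg.mpr hst) (by linarith : 0 ≤ 2 * b + (s + t) * c)]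

/-- Per-policy eventual ε-antitonicity: for `X, Y ∈ L²(μ)` with `Y ≥ 0` a.e.,
`Var(Y) > 0` and `λ ≥ 0`, the map
`ε ↦ −E[X + ε·Y] − λ·√(Var(X + ε·Y))` is nonincreasing on
`[max(0, −Cov(X, Y)/Var(Y)), ∞)`. -/
theorem stmt_8 {Ω : Type*} [MeasurableSpace Ω] (μ : Measure Ω) [IsProbabilityMeasure μ]
    (X Y : Ω → ℝ) (hX : MemLp X 2 μ) (hY : MemLp Y 2 μ)
    (hY0 : ∀ᵐ ω ∂μ, 0 ≤ Y ω) (hVarY : 0 < Var μ Y)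
    (lam : ℝ) (hlam : 0 ≤ lam) :
    AntitoneOn (fun ε : ℝ =>
        -(∫ ω, (X ω + ε * Y ω) ∂μ) -
          lam * Real.sqrt (Var μ (fun ω => X ω + ε * Y ω)))
      (Set.Ici (max 0 (-(Cov μ X Y) / Var μ Y))) := by
  intro s hs t ht hst
  have hmean := antitone_neg_integral_add_const_mul (hX.integrable one_le_two)
    (hY.integrable one_le_two) hY0 hst
  have hvar : Var μ (fun ω => X ω + s * Y ω) ≤ Var μ (fun ω => X ω + t * Y ω) := by
    rw [Var_add_const_mul hX hY, Var_add_const_mul hX hY]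
    exact (monotoneOn_quadratic hVarY).mono (Set.Ici_subset_Ici.mpr (le_max_right _ _)) hs ht hst
  have hsd := mul_le_mul_of_nonneg_left (Real.sqrt_le_sqrt hvar) hlam
  dsimp only at hmean ⊢
  linarith
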